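/- For every n ≥ 1, the adjacency matrix Δₙ = aₙ + bₙ + cₙ of the level-n Schreier graph of the Hanoi Towers group on three pegs has exactly 3·2^{n−1} − 1 distinct real eigenvalues. -/

import Mathlib

/-- Generator matrix `aₙ` (size `3ⁿ × 3ⁿ`, indexed by ternary words of length `n`):
`a₀ = [1]`, `a_{n+1} = [[0ₙ,1ₙ,0ₙ],[1ₙ,0ₙ,0ₙ],[0ₙ,0ₙ,aₙ]]` in block form. -/
noncomputable def hanoiGenA : (n : ℕ) → Matrix (Fin n → Fin 3) (Fin n → Fin 3) ℝ
  | 0 => 1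
  | n + 1 => Matrix.of fun u v =>
      (![![0, 1, 0],
         ![1, 0, 0],
         ![0, 0, hanoiGenA n]] :
        Fin 3 → Fin 3 → Matrix (Fin n → Fin 3) (Fin n → Fin 3) ℝ)
        (u 0) (v 0) (Fin.tail u) (Fin.tail v)

/-- `b₀ = [1]`, `b_{n+1} = [[0ₙ,0ₙ,1ₙ],[0ₙ,bₙ,0ₙ],[1ₙ,0ₙ,0ₙ]]`. -/
noncomputable def hanoiGenB : (n : ℕ) → Matrix (Fin n → Fin 3) (Fin n → Fin 3) ℝ
  | 0 => 1
  | n + 1 => Matrix.of fun u v =>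
      (![![0, 0, 1],
         ![0, hanoiGenB n, 0],
         ![1, 0, 0]] :
        Fin 3 → Fin 3 → Matrix (Fin n → Fin 3) (Fin n → Fin 3) ℝ)
        (u 0) (v 0) (Fin.tail u) (Fin.tail v)

/-- `c₀ = [1]`, `c_{n+1} = [[cₙ,0ₙ,0ₙ],[0ₙ,0ₙ,1ₙ],[0ₙ,1ₙ,0ₙ]]`. -/
noncomputable def hanoiGenC : (n : ℕ) → Matrix (Fin n → Fin 3) (Fin n → Fin 3) ℝ
  | 0 => 1
  | n + 1 => Matrix.of fun u v =>
      (![![hanoiGenC n, 0, 0],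
         ![0, 0, 1],
         ![0, 1, 0]] :
        Fin 3 → Fin 3 → Matrix (Fin n → Fin 3) (Fin n → Fin 3) ℝ)
        (u 0) (v 0) (Fin.tail u) (Fin.tail v)

/-- The adjacency matrix `Δₙ = aₙ + bₙ + cₙ` of the level-`n` Schreier graph `Γₙ`
of the Hanoi Towers group on three pegs. -/
noncomputable def hanoiAdj (n : ℕ) : Matrix (Fin n → Fin 3) (Fin n → Fin 3) ℝ :=
  hanoiGenA n + hanoiGenB n + hanoiGenC n

/-- The quadratic polynomial `f(x) = x² - x - 3`. -/
noncomputable def hanoiF (x : ℝ) : ℝ := x ^ 2 - x - 3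

/-!
The matrix `Δₙ₊₁` has the block form `[[cₙ,1,1],[1,bₙ,1],[1,1,aₙ]]`, where `aₙ, bₙ, cₙ` are
involutions. For an eigenvector `(w₀,w₁,w₂)` with eigenvalue `x`, applying the involution on each
diagonal block expresses every `wᵢ` through `s = w₀ + w₁ + w₂`, and then `s` is an eigenvector of
`Δₙ = aₙ + bₙ + cₙ` with eigenvalue `f(x)`; conversely `s` determines an eigenvector upstairs. This
works as long as `x(x + 2) ≠ 0`. The two exceptional values are eigenvalues from levels `1` and
`2` on, with explicit eigenvectors, and `f(-2) = 3 = f(3)` is an eigenvalue at every level, so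
`spec Δₙ₊₂ = {0} ∪ f⁻¹(spec Δₙ₊₁)`. All spectra lie in `[-2, 3]`, where `f` is two-to-one and
misses `0`, whence `Nₙ₊₂ = 2 Nₙ₊₁ + 1` with `N₁ = 2`.
-/

open Matrix

section ConsSlice

variable {β R : Type*} {n : ℕ}

def consSlice (w : (Fin (n + 1) → β) → R) (i : β) : (Fin n → β) → R :=
  fun t => w (Fin.cons i t)

theorem consSlice_injective :
    Function.Injective (consSlice : ((Fin (n + 1) → β) → R) → β → (Fin n → β) → R) := by
  intro w w' h
  funext u
  simpa [consSlice, Fin.cons_self_tail] using congrFun (congrFun h (u 0)) (Fin.tail u)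

theorem consSlice_surjective :
    Function.Surjective (consSlice : ((Fin (n + 1) → β) → R) → β → (Fin n → β) → R) :=
  fun W => ⟨fun u => W (u 0) (Fin.tail u), by funext i t; simp [consSlice]⟩

theorem consSlice_mulVec_of [Fintype β] [DecidableEq β] [NonUnitalNonAssocSemiring R]
    (F : β → β → Matrix (Fin n → β) (Fin n → β) R) (w : (Fin (n + 1) → β) → R) :
    consSlice (Matrix.of (fun u v => F (u 0) (v 0) (Fin.tail u) (Fin.tail v)) *ᵥ w) =
      fun i => ∑ j, F i j *ᵥ consSlice w j := by
  funext i t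
  simp only [consSlice, mulVec, dotProduct, Finset.sum_apply, of_apply]
  rw [← (Fin.consEquiv fun _ => β).sum_comp, Fintype.sum_prod_type]
  simp [Fin.consEquiv]

theorem consSlice_add [Add R] (w w' : (Fin (n + 1) → β) → R) :
    consSlice (w + w') = consSlice w + consSlice w' := rfl

theorem consSlice_one [One R] (i : β) : consSlice (1 : (Fin (n + 1) → β) → R) i = 1 := rfl

end ConsSlice

theorem Matrix.mem_spectrum_iff_exists_mulVec_eq_smul {K ι : Type*} [Field K] [Fintype ι]
    [DecidableEq ι] (A : Matrix ι ι K) (x : K) :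
    x ∈ spectrum K A ↔ ∃ v ≠ 0, A *ᵥ v = x • v := by
  rw [← Matrix.spectrum_toLin', ← Module.End.hasEigenvalue_iff_mem_spectrum,
    Module.End.hasEigenvalue_iff, Submodule.ne_bot_iff]
  simp [and_comm]

section BlockOp

variable {K V ι : Type*} [Field K] [AddCommGroup V] [Module K V] [Fintype ι]

/-- The `ι × ι` block operator with diagonal blocks `g i` and identity blocks elsewhere. -/
def blockOp (g : ι → Module.End K V) (w : ι → V) : ι → V :=
  fun i => g i (w i) - w i + ∑ j, w j

theorem exists_blockOp_eigenvector_iff {g : ι → Module.End K V} (hg : ∀ i v, g i (g i v) = v)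
    {x : K} (hx : x * (x + 2) ≠ 0) :
    (∃ w ≠ 0, blockOp g w = x • w) ↔
      ∃ s ≠ 0, (∑ i, g i) s = (x * (x + 2) - Fintype.card ι * (x + 1)) • s := by
  constructor
  · rintro ⟨w, hw, h⟩
    set s := ∑ j, w j
    have key : ∀ i, (x * (x + 2)) • w i = (x + 1) • s + g i s := by
      intro i
      have hi : g i (w i) = (x + 1) • w i - s := by
        have hwi : g i (w i) - w i + s = x • w i := congrFun h i
        linear_combination (norm := module) hwi
      -- apply the involution `g i` to solve for `w i`
      have := congrArg (g i) hi
      rw [hg, map_sub, map_smul, hi] at this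
      linear_combination (norm := module) -this
    refine ⟨s, fun hs => hw (funext fun i => ?_), ?_⟩
    · have := key i
      rw [hs, map_zero, smul_zero, add_zero] at this
      exact (smul_eq_zero.1 this).resolve_left hx
    · have hsum : (x * (x + 2)) • s = ∑ i, ((x + 1) • s + g i s) := by
        rw [Finset.smul_sum]
        exact Finset.sum_congr rfl fun i _ => key i
      rw [Finset.sum_add_distrib, Finset.sum_const, Finset.card_univ,
        ← Nat.cast_smul_eq_nsmul K] at hsum
      rw [LinearMap.sum_apply]
      linear_combination (norm := module) -hsum
  · rintro ⟨s, hs, h⟩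
    set w : ι → V := fun i => (x + 1) • s + g i s
    have hsum : ∑ j, w j = (x * (x + 2)) • s := by
      rw [LinearMap.sum_apply] at h
      simp only [w, Finset.sum_add_distrib, Finset.sum_const, Finset.card_univ, h,
        ← Nat.cast_smul_eq_nsmul K]
      module
    refine ⟨w, fun hw => hs ?_, funext fun i => ?_⟩
    · have : (x * (x + 2)) • s = 0 := by simp [← hsum, hw]
      exact (smul_eq_zero.1 this).resolve_left hx
    · simp only [blockOp, hsum, Pi.smul_apply, w, map_add, map_smul, hg]
      module

theorem blockOp_eq_neg_two_smul {g : ι → Module.End K V} {w : ι → V}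
    (hg : ∀ i, g i (w i) = -w i) (hw : ∑ i, w i = 0) : blockOp g w = (-2 : K) • w := by
  funext i
  simp only [blockOp, hg, hw, Pi.smul_apply]
  module

end BlockOp

section HanoiBlocks

variable (n : ℕ)

theorem consSlice_hanoiGenA_mulVec (w : (Fin (n + 1) → Fin 3) → ℝ) :
    consSlice (hanoiGenA (n + 1) *ᵥ w) =
      ![consSlice w 1, consSlice w 0, hanoiGenA n *ᵥ consSlice w 2] := by
  rw [hanoiGenA, consSlice_mulVec_of]
  funext i
  fin_cases i <;> simp [Fin.sum_univ_three]

theorem consSlice_hanoiGenB_mulVec (w : (Fin (n + 1) → Fin 3) → ℝ) :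
    consSlice (hanoiGenB (n + 1) *ᵥ w) =
      ![consSlice w 2, hanoiGenB n *ᵥ consSlice w 1, consSlice w 0] := by
  rw [hanoiGenB, consSlice_mulVec_of]
  funext i
  fin_cases i <;> simp [Fin.sum_univ_three]

theorem consSlice_hanoiGenC_mulVec (w : (Fin (n + 1) → Fin 3) → ℝ) :
    consSlice (hanoiGenC (n + 1) *ᵥ w) =
      ![hanoiGenC n *ᵥ consSlice w 0, consSlice w 2, consSlice w 1] := by
  rw [hanoiGenC, consSlice_mulVec_of]
  funext i
  fin_cases i <;> simp [Fin.sum_univ_three]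

theorem hanoiGenA_mulVec_involutive : Function.Involutive (hanoiGenA n *ᵥ ·) := by
  induction n with
  | zero => exact fun v => by simp [hanoiGenA]
  | succ n ih =>
    refine fun v => consSlice_injective ?_
    simp only [consSlice_hanoiGenA_mulVec]
    funext i
    fin_cases i <;> simp [ih _]

theorem hanoiGenB_mulVec_involutive : Function.Involutive (hanoiGenB n *ᵥ ·) := by
  induction n with
  | zero => exact fun v => by simp [hanoiGenB]
  | succ n ih =>
    refine fun v => consSlice_injective ?_
    simp only [consSlice_hanoiGenB_mulVec]
    funext i
    fin_cases i <;> simp [ih _]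

theorem hanoiGenC_mulVec_involutive : Function.Involutive (hanoiGenC n *ᵥ ·) := by
  induction n with
  | zero => exact fun v => by simp [hanoiGenC]
  | succ n ih =>
    refine fun v => consSlice_injective ?_
    simp only [consSlice_hanoiGenC_mulVec]
    funext i
    fin_cases i <;> simp [ih _]

theorem hanoiGenB_mulVec_one : hanoiGenB n *ᵥ 1 = 1 := by
  induction n with
  | zero => simp [hanoiGenB]
  | succ n ih =>
    refine consSlice_injective ?_
    rw [consSlice_hanoiGenB_mulVec]
    funext i
    fin_cases i <;> simp [consSlice_one, ih]

theorem hanoiGenC_mulVec_one : hanoiGenC n *ᵥ 1 = 1 := by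
  induction n with
  | zero => simp [hanoiGenC]
  | succ n ih =>
    refine consSlice_injective ?_
    rw [consSlice_hanoiGenC_mulVec]
    funext i
    fin_cases i <;> simp [consSlice_one, ih]

noncomputable def hanoiBlocks : Fin 3 → Module.End ℝ ((Fin n → Fin 3) → ℝ) :=
  ![(hanoiGenC n).mulVecLin, (hanoiGenB n).mulVecLin, (hanoiGenA n).mulVecLin]

theorem hanoiBlocks_apply_apply (i : Fin 3) (v : (Fin n → Fin 3) → ℝ) :
    hanoiBlocks n i (hanoiBlocks n i v) = v := by
  fin_cases i
  · exact hanoiGenC_mulVec_involutive n v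
  · exact hanoiGenB_mulVec_involutive n v
  · exact hanoiGenA_mulVec_involutive n v

theorem sum_hanoiBlocks : ∑ i, hanoiBlocks n i = (hanoiAdj n).mulVecLin := by
  simp [hanoiBlocks, hanoiAdj, Fin.sum_univ_three, Matrix.mulVecLin_add]
  abel

theorem consSlice_hanoiAdj_mulVec (w : (Fin (n + 1) → Fin 3) → ℝ) :
    consSlice (hanoiAdj (n + 1) *ᵥ w) = blockOp (hanoiBlocks n) (consSlice w) := by
  rw [hanoiAdj, add_mulVec, add_mulVec, consSlice_add, consSlice_add, consSlice_hanoiGenA_mulVec,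
    consSlice_hanoiGenB_mulVec, consSlice_hanoiGenC_mulVec]
  funext i
  fin_cases i <;> simp [blockOp, hanoiBlocks, Fin.sum_univ_three] <;> abel

end HanoiBlocks

section QuadraticMap

noncomputable def hanoiRoot (θ : ℝ) : ℝ := (1 + √(13 + 4 * θ)) / 2

theorem hanoiF_eq_iff {x θ : ℝ} (hθ : -13 / 4 ≤ θ) :
    hanoiF x = θ ↔ x = hanoiRoot θ ∨ x = 1 - hanoiRoot θ := by
  have hsq : √(13 + 4 * θ) ^ 2 = 13 + 4 * θ := Real.sq_sqrt (by linarith)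
  unfold hanoiF hanoiRoot
  constructor
  · intro h
    have : (x - (1 + √(13 + 4 * θ)) / 2) * (x - (1 - (1 + √(13 + 4 * θ)) / 2)) = 0 := by
      linear_combination h - hsq / 4
    rcases mul_eq_zero.1 this with h | h
    exacts [.inl (by linarith), .inr (by linarith)]
  · rintro (rfl | rfl) <;> linear_combination hsq / 4

theorem one_half_lt_hanoiRoot {θ : ℝ} (hθ : -13 / 4 < θ) : 1 / 2 < hanoiRoot θ := by
  have : 0 < √(13 + 4 * θ) := Real.sqrt_pos.2 (by linarith)
  unfold hanoiRoot
  linarith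

theorem mul_add_two_eq_zero_iff {x : ℝ} : x * (x + 2) = 0 ↔ x = 0 ∨ x = -2 := by
  rw [mul_eq_zero, add_eq_zero_iff_eq_neg]

theorem mem_Icc_of_hanoiF_le {x : ℝ} (h : hanoiF x ≤ 3) : x ∈ Set.Icc (-2) 3 := by
  unfold hanoiF at h
  constructor <;> nlinarith

theorem preimage_hanoiF {S : Set ℝ} (hS : S ⊆ Set.Ioi (-13 / 4)) :
    hanoiF ⁻¹' S = hanoiRoot '' S ∪ (1 - ·) '' (hanoiRoot '' S) := by
  ext x
  simp only [Set.mem_preimage, Set.mem_union, Set.image_image, Set.mem_image]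
  constructor
  · intro hx
    rcases (hanoiF_eq_iff (hS hx).le).1 rfl with h | h
    exacts [.inl ⟨_, hx, h.symm⟩, .inr ⟨_, hx, h.symm⟩]
  · rintro (⟨θ, hθ, rfl⟩ | ⟨θ, hθ, rfl⟩)
    · rwa [(hanoiF_eq_iff (hS hθ).le).2 (.inl rfl)]
    · rwa [(hanoiF_eq_iff (hS hθ).le).2 (.inr rfl)]

theorem finite_preimage_hanoiF {S : Set ℝ} (hS : S ⊆ Set.Ioi (-13 / 4))
    (hfin : S.Finite) : (hanoiF ⁻¹' S).Finite := by
  rw [preimage_hanoiF hS]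
  exact (hfin.image _).union ((hfin.image _).image _)

theorem ncard_preimage_hanoiF {S : Set ℝ} (hS : S ⊆ Set.Ioi (-13 / 4))
    (hfin : S.Finite) : (hanoiF ⁻¹' S).ncard = 2 * S.ncard := by
  have hinj : Set.InjOn hanoiRoot S := Set.LeftInvOn.injOn fun θ hθ =>
    (hanoiF_eq_iff (hS hθ).le).2 (.inl rfl)
  have hdisj : Disjoint (hanoiRoot '' S) ((1 - ·) '' (hanoiRoot '' S)) := by
    refine Set.disjoint_left.2 ?_
    rintro _ ⟨θ, hθ, rfl⟩ ⟨_, ⟨θ', hθ', rfl⟩, h⟩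
    linarith [one_half_lt_hanoiRoot (hS hθ), one_half_lt_hanoiRoot (hS hθ')]
  rw [preimage_hanoiF hS, Set.ncard_union_eq hdisj (hfin.image _) ((hfin.image _).image _),
    Set.ncard_image_of_injective _ sub_right_injective, hinj.ncard_image]
  ring

end QuadraticMap

section Spectrum

theorem mem_spectrum_hanoiAdj_succ_iff_blockOp {n : ℕ} {x : ℝ} :
    x ∈ spectrum ℝ (hanoiAdj (n + 1)) ↔ ∃ w ≠ 0, blockOp (hanoiBlocks n) w = x • w := by
  rw [Matrix.mem_spectrum_iff_exists_mulVec_eq_smul, consSlice_surjective.exists]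
  refine exists_congr fun w => and_congr (consSlice_injective.ne_iff' rfl).symm ?_
  rw [← consSlice_hanoiAdj_mulVec]
  exact consSlice_injective.eq_iff.symm

theorem mem_spectrum_hanoiAdj_succ_iff {n : ℕ} {x : ℝ} (hx : x * (x + 2) ≠ 0) :
    x ∈ spectrum ℝ (hanoiAdj (n + 1)) ↔ hanoiF x ∈ spectrum ℝ (hanoiAdj n) := by
  have hf : hanoiF x = x * (x + 2) - (Fintype.card (Fin 3) : ℝ) * (x + 1) := by
    simp only [hanoiF, Fintype.card_fin]
    ring
  rw [mem_spectrum_hanoiAdj_succ_iff_blockOp, Matrix.mem_spectrum_iff_exists_mulVec_eq_smul, hf,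
    exists_blockOp_eigenvector_iff (hanoiBlocks_apply_apply n) hx, sum_hanoiBlocks]
  rfl

theorem spectrum_hanoiAdj_zero : spectrum ℝ (hanoiAdj 0) = {3} := by
  have h : hanoiAdj 0 = algebraMap ℝ _ 3 := by
    simp only [hanoiAdj, hanoiGenA, hanoiGenB, hanoiGenC, map_ofNat]
    norm_num
  rw [h, spectrum.scalar_eq]

theorem three_mem_spectrum_hanoiAdj : ∀ n, (3 : ℝ) ∈ spectrum ℝ (hanoiAdj n)
  | 0 => by simp [spectrum_hanoiAdj_zero]
  | n + 1 => (mem_spectrum_hanoiAdj_succ_iff (by norm_num)).2 <| by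
      rw [show hanoiF 3 = 3 by norm_num [hanoiF]]
      exact three_mem_spectrum_hanoiAdj n

theorem zero_mem_spectrum_hanoiAdj_succ (n : ℕ) : (0 : ℝ) ∈ spectrum ℝ (hanoiAdj (n + 1)) := by
  refine mem_spectrum_hanoiAdj_succ_iff_blockOp.2 ⟨![1, -1, 0], fun h => ?_, ?_⟩
  · simpa using congrFun h 0
  · funext i
    fin_cases i <;>
      simp [blockOp, hanoiBlocks, Fin.sum_univ_three, mulVec_neg, hanoiGenB_mulVec_one,
        hanoiGenC_mulVec_one]

theorem neg_two_not_mem_spectrum_hanoiAdj_one : (-2 : ℝ) ∉ spectrum ℝ (hanoiAdj 1) := by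
  rw [mem_spectrum_hanoiAdj_succ_iff_blockOp]
  rintro ⟨w, hw, h⟩
  have hb : ∀ i, hanoiBlocks 0 i = 1 := by
    intro i
    fin_cases i <;> ext <;> simp [hanoiBlocks, hanoiGenA, hanoiGenB, hanoiGenC]
  have h' : ∀ i, ∑ j, w j = (-2 : ℝ) • w i := fun i => by
    simpa [blockOp, hb] using congrFun h i
  apply hw
  funext i t
  have := fun i => congrFun (h' i) t
  simp only [Fin.sum_univ_three, Finset.sum_apply, Pi.smul_apply, smul_eq_mul] at this
  fin_cases i <;> simp <;> linarith [this 0, this 1, this 2]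

theorem neg_two_mem_spectrum_hanoiAdj_add_two (n : ℕ) :
    (-2 : ℝ) ∈ spectrum ℝ (hanoiAdj (n + 2)) := by
  -- row `i` is negated by the letter swap of the generator in block `i`; columns sum to `0`
  let G : Fin 3 → Fin 3 → ℝ := ![![0, 1, -1], ![-1, 0, 1], ![1, -1, 0]]
  let w : Fin 3 → (Fin (n + 1) → Fin 3) → ℝ := fun i t => G i (t 0)
  have hslice : ∀ i j, consSlice (w i) j = Function.const _ (G i j) := fun _ _ => rfl
  have hslice_neg : ∀ i j, consSlice (-w i) j = Function.const _ (-G i j) := fun _ _ => rfl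
  have hneg : ∀ i, hanoiBlocks (n + 1) i (w i) = -w i := by
    intro i
    refine consSlice_injective ?_
    funext j
    fin_cases i <;> fin_cases j <;>
      simp [hanoiBlocks, consSlice_hanoiGenA_mulVec, consSlice_hanoiGenB_mulVec,
        consSlice_hanoiGenC_mulVec, hslice, hslice_neg, G]
  refine mem_spectrum_hanoiAdj_succ_iff_blockOp.2
    ⟨w, fun h => ?_, blockOp_eq_neg_two_smul hneg ?_⟩
  · simpa [w, G] using congrFun (congrFun h 0) (fun _ => 1)
  · funext t
    simp only [w, Finset.sum_apply, Fin.sum_univ_three, Pi.zero_apply]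
    generalize t 0 = j
    fin_cases j <;> simp [G]

theorem spectrum_hanoiAdj_one : spectrum ℝ (hanoiAdj 1) = {0, 3} := by
  ext x
  refine ⟨fun hx => ?_, ?_⟩
  · by_cases hx0 : x * (x + 2) = 0
    · rcases mul_add_two_eq_zero_iff.1 hx0 with rfl | rfl
      · exact .inl rfl
      · exact absurd hx neg_two_not_mem_spectrum_hanoiAdj_one
    · have h3 := (mem_spectrum_hanoiAdj_succ_iff hx0).1 hx
      rw [spectrum_hanoiAdj_zero, Set.mem_singleton_iff, hanoiF] at h3
      have : (x - 3) * (x + 2) = 0 := by linear_combination h3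
      rcases mul_eq_zero.1 this with h | h
      · exact .inr (show x = 3 by linarith)
      · exact absurd (by rw [h, mul_zero]) hx0
  · rintro (rfl | rfl)
    exacts [zero_mem_spectrum_hanoiAdj_succ 0, three_mem_spectrum_hanoiAdj 1]

theorem spectrum_hanoiAdj_add_two (n : ℕ) :
    spectrum ℝ (hanoiAdj (n + 2)) = insert 0 (hanoiF ⁻¹' spectrum ℝ (hanoiAdj (n + 1))) := by
  ext x
  rw [Set.mem_insert_iff, Set.mem_preimage]
  by_cases hx : x * (x + 2) = 0
  · obtain rfl | rfl := mul_add_two_eq_zero_iff.1 hx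
    · simp [zero_mem_spectrum_hanoiAdj_succ]
    · rw [show hanoiF (-2) = 3 by norm_num [hanoiF]]
      simp [neg_two_mem_spectrum_hanoiAdj_add_two, three_mem_spectrum_hanoiAdj]
  · rw [mem_spectrum_hanoiAdj_succ_iff hx, or_iff_right]
    rintro rfl
    simp at hx

theorem spectrum_hanoiAdj_subset_Icc : ∀ n, spectrum ℝ (hanoiAdj n) ⊆ Set.Icc (-2) 3
  | 0 => by norm_num [spectrum_hanoiAdj_zero]
  | n + 1 => fun x hx => by
    by_cases hx0 : x * (x + 2) = 0
    · rcases mul_add_two_eq_zero_iff.1 hx0 with rfl | rfl <;> norm_num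
    · exact mem_Icc_of_hanoiF_le
        (spectrum_hanoiAdj_subset_Icc n ((mem_spectrum_hanoiAdj_succ_iff hx0).1 hx)).2

theorem ncard_spectrum_hanoiAdj_succ :
    ∀ n, (spectrum ℝ (hanoiAdj (n + 1))).ncard = 3 * 2 ^ n - 1
  | 0 => by rw [spectrum_hanoiAdj_one, Set.ncard_pair (by norm_num)]; rfl
  | n + 1 => by
    have hS : spectrum ℝ (hanoiAdj (n + 1)) ⊆ Set.Ioi (-13 / 4) := fun x hx =>
      lt_of_lt_of_le (by norm_num) (spectrum_hanoiAdj_subset_Icc _ hx).1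
    have h0 : (0 : ℝ) ∉ hanoiF ⁻¹' spectrum ℝ (hanoiAdj (n + 1)) := fun h => by
      have := (spectrum_hanoiAdj_subset_Icc _ h).1
      norm_num [hanoiF] at this
    rw [spectrum_hanoiAdj_add_two, Set.ncard_insert_of_notMem h0
      (finite_preimage_hanoiF hS (Matrix.finite_spectrum _)),
      ncard_preimage_hanoiF hS (Matrix.finite_spectrum _), ncard_spectrum_hanoiAdj_succ n, pow_succ]
    have := Nat.one_le_two_pow (n := n)
    omega

end Spectrum

/-- For `n ≥ 1`, the adjacency matrix `Δₙ = aₙ + bₙ + cₙ` of the level-`n` Schreier graph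
of the Hanoi Towers group on three pegs has exactly `3·2^{n-1} - 1` distinct real
eigenvalues. -/
theorem hanoiAdj_card_spectrum (n : ℕ) (hn : 1 ≤ n) :
    (spectrum ℝ (hanoiAdj n)).ncard = 3 * 2 ^ (n - 1) - 1 := by
  obtain ⟨m, rfl⟩ := Nat.exists_eq_add_of_le' hn
  exact ncard_spectrum_hanoiAdj_succ m
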